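/- arXiv:2303.08407 — 6 statements merged into one kernel-verified Lean document; each statement's English description precedes it below -/
import Mathlib

section
/- For any two Hermitian operators A₀, A₁ on a finite-dimensional Hilbert space H with A₀² = A₁² = I, there exists an orthogonal direct-sum decomposition H = ⊕_μ H^μ with dim H^μ ≤ 2 such that both A₀ and A₁ preserve each subspace H^μ (Jordan's lemma). -/
/-!
In every nonzero subspace `p` invariant under both involutions, `A₀ A₁` has an eigenvector
`v`, say `A₀ (A₁ v) = c • v`. Then `A₁ v = c • A₀ v` and `v = c • A₁ (A₀ v)`, so `span {v, A₀ v}`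
is a block of dimension at most 2 invariant under both `A₀` and `A₁`. As `A₀` and `A₁` are
symmetric, the orthogonal complement of this block inside `p` is again invariant, and peeling
off blocks one at a time decomposes the whole space.
-/

open scoped InnerProductSpace

open Function Module End Submodule

theorem Fin.iSup_cons {α : Type*} [CompleteLattice α] {n : ℕ} (a : α) (f : Fin n → α) :
    ⨆ i, (Fin.cons a f : Fin (n + 1) → α) i = a ⊔ ⨆ i, f i := by
  simp only [← (finSuccEquiv n).symm.iSup_comp, iSup_option, finSuccEquiv_symm_none,
    Fin.cons_zero, finSuccEquiv_symm_some, Fin.cons_succ]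

section OrthogonalDecomposition

variable {𝕜 E : Type*} [RCLike 𝕜] [NormedAddCommGroup E] [InnerProductSpace 𝕜 E]

theorem Submodule.orthogonal_inf_lt_of_le {W K : Submodule 𝕜 E} (hWK : W ≤ K) (hW : W ≠ ⊥) :
    Wᗮ ⊓ K < K := by
  refine inf_le_right.lt_of_ne fun h => hW ?_
  rw [← W.inf_orthogonal_eq_bot, eq_comm, inf_eq_left]
  exact hWK.trans (h ▸ inf_le_left)

theorem Submodule.exists_pairwise_isOrtho_iSup_eq [FiniteDimensional 𝕜 E]
    {S : Set (Submodule 𝕜 E)} {P : Submodule 𝕜 E → Prop}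
    (hS : ∀ K ∈ S, ∀ W ≤ K, P W → Wᗮ ⊓ K ∈ S)
    (hP : ∀ K ∈ S, K ≠ ⊥ → ∃ W ≤ K, W ≠ ⊥ ∧ P W) {K : Submodule 𝕜 E} (hK : K ∈ S) :
    ∃ (n : ℕ) (V : Fin n → Submodule 𝕜 E),
      Pairwise ((· ⟂ ·) on V) ∧ (∀ i, P (V i)) ∧ ⨆ i, V i = K := by
  induction K using WellFoundedLT.induction with
  | ind K ih =>
  rcases eq_or_ne K ⊥ with rfl | hK₀
  · exact ⟨0, Fin.elim0, fun i => i.elim0, fun i => i.elim0, by simp⟩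
  obtain ⟨W, hWK, hW₀, hPW⟩ := hP K hK hK₀
  obtain ⟨n, V, hVortho, hPV, hVsup⟩ :=
    ih _ (orthogonal_inf_lt_of_le hWK hW₀) (hS K hK W hWK hPW)
  have hVW (i : Fin n) : V i ⟂ W :=
    isOrtho_iff_le.mpr ((le_iSup V i).trans (hVsup.trans_le inf_le_left))
  refine ⟨n + 1, Fin.cons W V, ?_, Fin.cases hPW hPV, ?_⟩
  · exact pairwise_fin_succ_iff.mpr
      ⟨hVW, fun j => (hVW j).symm, fun i j hij => hVortho hij⟩
  · rw [Fin.iSup_cons, hVsup, sup_orthogonal_inf_of_hasOrthogonalProjection hWK]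

end OrthogonalDecomposition

section Involutions

variable {K V : Type*} [Field K] [AddCommGroup V] [Module K V]

theorem finrank_span_pair_le (v w : V) : finrank K (span K {v, w}) ≤ 2 := by
  classical
  refine (finrank_span_le_card ({v, w} : Set V)).trans ?_
  simpa using Finset.card_le_two

namespace Module.End

theorem span_mem_invtSubmodule_iff {f : End K V} {s : Set V} :
    span K s ∈ f.invtSubmodule ↔ ∀ x ∈ s, f x ∈ span K s := by
  rw [mem_invtSubmodule, span_le]
  rfl

theorem exists_hasEigenvector_mem_of_mem_invtSubmodule [IsAlgClosed K] [FiniteDimensional K V]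
    {f : End K V} {p : Submodule K V} (hp : p ∈ f.invtSubmodule) (hp₀ : p ≠ ⊥) :
    ∃ c : K, ∃ v ∈ p, f.HasEigenvector c v := by
  have : Nontrivial p := nontrivial_iff_ne_bot.mpr hp₀
  obtain ⟨c, hc⟩ := exists_eigenvalue (f.restrict hp)
  obtain ⟨w, hw⟩ := hc.exists_hasEigenvector
  exact ⟨c, w, w.2, hasEigenvector_iff.mpr
    ⟨mem_eigenspace_iff.mpr (congrArg Subtype.val hw.apply_eq_smul), by simpa using hw.2⟩⟩

variable {A₀ A₁ : End K V}

theorem span_pair_apply_mem_invtSubmodule (h₀ : A₀ ∘ₗ A₀ = LinearMap.id) (v : V) :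
    span K {v, A₀ v} ∈ A₀.invtSubmodule := by
  have h₀v : A₀ (A₀ v) = v := LinearMap.congr_fun h₀ v
  simp only [span_mem_invtSubmodule_iff, Set.mem_insert_iff, Set.mem_singleton_iff,
    forall_eq_or_imp, forall_eq, h₀v]
  exact ⟨subset_span (by simp), subset_span (by simp)⟩

theorem span_pair_apply_mem_invtSubmodule_of_apply_apply_eq_smul
    (h₀ : A₀ ∘ₗ A₀ = LinearMap.id) (h₁ : A₁ ∘ₗ A₁ = LinearMap.id) {v : V} {c : K}
    (hv : A₀ (A₁ v) = c • v) : span K {v, A₀ v} ∈ A₁.invtSubmodule := by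
  have h₀' (x : V) : A₀ (A₀ x) = x := LinearMap.congr_fun h₀ x
  have hA₁v : A₁ v = c • A₀ v := by
    simpa [h₀'] using congrArg A₀ hv
  have hA₁A₀v : v = c • A₁ (A₀ v) := by
    simpa [hA₁v] using (LinearMap.congr_fun h₁ v).symm
  simp only [span_mem_invtSubmodule_iff, Set.mem_insert_iff, Set.mem_singleton_iff,
    forall_eq_or_imp, forall_eq, hA₁v]
  refine ⟨smul_mem _ _ (subset_span (by simp)), ?_⟩
  rcases eq_or_ne c 0 with rfl | hc
  · obtain rfl : v = 0 := by simpa using hA₁A₀v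
    simp
  · rw [eq_inv_smul_iff₀ hc |>.mpr hA₁A₀v.symm]
    exact smul_mem _ _ (subset_span (by simp))

theorem exists_finrank_le_two_mem_invtSubmodule_inf [IsAlgClosed K] [FiniteDimensional K V]
    (h₀ : A₀ ∘ₗ A₀ = LinearMap.id) (h₁ : A₁ ∘ₗ A₁ = LinearMap.id) {p : Submodule K V}
    (hp : p ∈ A₀.invtSubmodule ⊓ A₁.invtSubmodule) (hp₀ : p ≠ ⊥) :
    ∃ W ≤ p, W ≠ ⊥ ∧ W ∈ A₀.invtSubmodule ⊓ A₁.invtSubmodule ∧ finrank K W ≤ 2 := by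
  obtain ⟨c, v, hvp, hv⟩ :=
    exists_hasEigenvector_mem_of_mem_invtSubmodule (invtSubmodule.comp A₀ hp.1 hp.2) hp₀
  refine ⟨span K {v, A₀ v}, ?_, ?_, ⟨?_, ?_⟩, finrank_span_pair_le v (A₀ v)⟩
  · rw [span_le, Set.insert_subset_iff, Set.singleton_subset_iff]
    exact ⟨hvp, hp.1 hvp⟩
  · exact (Submodule.ne_bot_iff _).mpr ⟨v, subset_span (by simp), hv.2⟩
  · exact span_pair_apply_mem_invtSubmodule h₀ v
  · exact span_pair_apply_mem_invtSubmodule_of_apply_apply_eq_smul h₀ h₁ hv.apply_eq_smul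

end Module.End

end Involutions

/-- **Jordan's lemma.** For any two Hermitian involutions `A₀ A₁` on a finite-dimensional
complex inner product space `H`, there is an orthogonal direct-sum decomposition of `H`
into subspaces of dimension at most 2, each invariant under both `A₀` and `A₁`. -/
theorem jordan_lemma {H : Type*} [NormedAddCommGroup H] [InnerProductSpace ℂ H]
    [FiniteDimensional ℂ H]
    (A₀ A₁ : H →ₗ[ℂ] H) (h₀herm : A₀.IsSymmetric) (h₁herm : A₁.IsSymmetric)
    (h₀sq : A₀ ∘ₗ A₀ = LinearMap.id) (h₁sq : A₁ ∘ₗ A₁ = LinearMap.id) :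
    ∃ (n : ℕ) (V : Fin n → Submodule ℂ H),
      DirectSum.IsInternal V ∧
      (∀ i j, i ≠ j → ∀ x ∈ V i, ∀ y ∈ V j, ⟪x, y⟫_ℂ = 0) ∧
      (∀ i, Module.finrank ℂ (V i) ≤ 2) ∧
      (∀ i, ∀ x ∈ V i, A₀ x ∈ V i) ∧
      (∀ i, ∀ x ∈ V i, A₁ x ∈ V i) := by
  let S := invtSubmodule A₀ ⊓ invtSubmodule A₁
  have hcompl (K : Submodule ℂ H) (hK : K ∈ S) (W : Submodule ℂ H) (hW : W ∈ S) : Wᗮ ⊓ K ∈ S :=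
    ⟨Sublattice.inf_mem (h₀herm.orthogonalComplement_mem_invtSubmodule hW.1) hK.1,
      Sublattice.inf_mem (h₁herm.orthogonalComplement_mem_invtSubmodule hW.2) hK.2⟩
  obtain ⟨n, V, hortho, hV, hsup⟩ :=
    exists_pairwise_isOrtho_iSup_eq (S := S) (P := fun W => W ∈ S ∧ finrank ℂ W ≤ 2)
      (fun K hK W _ hW => hcompl K hK W hW.1)
      (fun K hK hK₀ => exists_finrank_le_two_mem_invtSubmodule_inf h₀sq h₁sq hK hK₀)
      (show ⊤ ∈ S from ⟨invtSubmodule.top_mem A₀, invtSubmodule.top_mem A₁⟩)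
  refine ⟨n, V, ?_, fun i j hij => isOrtho_iff_inner_eq.mp (hortho hij),
    fun i => (hV i).2, fun i => (hV i).1.1, fun i => (hV i).1.2⟩
  exact DirectSum.isInternal_submodule_of_iSupIndep_of_iSup_eq_top
    (OrthogonalFamily.of_pairwise hortho).independent hsup
end

section
/- For α ≥ 1, the maximal quantum value of the α-CHSH expression over all two-qubit states and ±1-valued qubit observables is 2√(α² + 1). -/
open Matrix Kronecker Complex Real ComplexOrder

/-- 2×2 complex matrices (one qubit). -/
abbrev M2 := Matrix (Fin 2) (Fin 2) ℂ
/-- 4×4 complex matrices (two qubits), indexed by `Fin 2 × Fin 2`. -/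
abbrev M4 := Matrix (Fin 2 × Fin 2) (Fin 2 × Fin 2) ℂ

noncomputable def σx : M2 := !![0, 1; 1, 0]
noncomputable def σy : M2 := !![0, -Complex.I; Complex.I, 0]
noncomputable def σz : M2 := !![1, 0; 0, -1]

/-- A ±1-valued qubit observable: Hermitian involution. -/
def IsObs (A : M2) : Prop := A.IsHermitian ∧ A * A = 1

/-- A two-qubit density operator. -/
def IsState (ρ : M4) : Prop := ρ.PosSemidef ∧ ρ.trace = 1

/-- The α-CHSH Bell operator. -/
noncomputable def Sop (α : ℝ) (A0 A1 B0 B1 : M2) : M4 :=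
  (α : ℂ) • (A0 ⊗ₖ B0 + A0 ⊗ₖ B1) + A1 ⊗ₖ B0 - A1 ⊗ₖ B1

/-- The α-CHSH Bell value of a state with given observables. -/
noncomputable def BellValue (ρ : M4) (α : ℝ) (A0 A1 B0 B1 : M2) : ℂ :=
  (ρ * Sop α A0 A1 B0 B1).trace

/-- Computational basis vectors of ℂ²⊗ℂ². -/
def ket (i j : Fin 2) : Fin 2 × Fin 2 → ℂ := fun p => if p = (i, j) then 1 else 0

noncomputable def PhiP : Fin 2 × Fin 2 → ℂ := ((Real.sqrt 2 : ℂ))⁻¹ • (ket 0 0 + ket 1 1)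
noncomputable def PhiM : Fin 2 × Fin 2 → ℂ := ((Real.sqrt 2 : ℂ))⁻¹ • (ket 0 0 - ket 1 1)
noncomputable def PsiP : Fin 2 × Fin 2 → ℂ := ((Real.sqrt 2 : ℂ))⁻¹ • (ket 0 1 + ket 1 0)
noncomputable def PsiM : Fin 2 × Fin 2 → ℂ := ((Real.sqrt 2 : ℂ))⁻¹ • (ket 0 1 - ket 1 0)

/-- Rank-one projector |v⟩⟨v|. -/
noncomputable def proj (v : Fin 2 × Fin 2 → ℂ) : M4 := Matrix.vecMulVec v (star v)

/-- Bell-diagonal two-qubit state. -/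
noncomputable def BellDiag (l1 l2 l3 l4 : ℝ) : M4 :=
  (l1 : ℂ) • proj PhiP + (l2 : ℂ) • proj PhiM + (l3 : ℂ) • proj PsiP + (l4 : ℂ) • proj PsiM

noncomputable def YY : M4 := σy ⊗ₖ σy

attribute [local instance] Classical.propDecidable

/-- The positive semidefinite square root of a positive semidefinite matrix (as defined in
the older Mathlib, where `Matrix.PosSemidef.sqrt` existed). -/
noncomputable def Matrix.PosSemidef.sqrt {n : Type*} [Fintype n] [DecidableEq n] {𝕜 : Type*}
    [RCLike 𝕜] {A : Matrix n n 𝕜} (hA : A.PosSemidef) : Matrix n n 𝕜 :=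
  (hA.1.eigenvectorUnitary : Matrix n n 𝕜) * diagonal ((↑) ∘ (√·) ∘ hA.1.eigenvalues) *
    (star hA.1.eigenvectorUnitary : Matrix n n 𝕜)

/-- Concurrence of a two-qubit state: `max {0, μ₁ − μ₂ − μ₃ − μ₄}` where the `μᵢ` are the
decreasingly ordered square roots of the eigenvalues of `√ρ (σy⊗σy) ρ* (σy⊗σy) √ρ`
(for the decreasingly ordered values, `μ₁ − μ₂ − μ₃ − μ₄ = 2 max μᵢ − ∑ μᵢ`). -/
noncomputable def concurrence (ρ : M4) : ℝ :=
  if hρ : ρ.PosSemidef then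
    if hX : (hρ.sqrt * (YY * ρ.map (starRingEnd ℂ) * YY) * hρ.sqrt).IsHermitian then
      let μ : Fin 2 × Fin 2 → ℝ := fun p => Real.sqrt (hX.eigenvalues p)
      max 0 (2 * (Finset.univ.sup' Finset.univ_nonempty μ) - ∑ p, μ p)
    else 0
  else 0

/-!
Write the Bell operator as `α A₀⊗(B₀+B₁) + A₁⊗(B₀−B₁)`. Since `(A⊗C)² = 1⊗C²` for an observable
`A`, the variance inequality `⟨X⟩² ≤ ⟨X²⟩` bounds the two expectation values `x, y` by
`x² + y² ≤ ⟨1⊗((B₀+B₁)² + (B₀−B₁)²)⟩ = 4`, and Cauchy–Schwarz in `ℝ²` gives `αx + y ≤ 2√(α²+1)`.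
The bound is attained on `Φ⁺` with `A₀ = σz`, `A₁ = σx`, `B₀, B₁ = cos θ σz ± sin θ σx`, where
`(cos θ, sin θ) = (α, 1)/√(α²+1)`.
-/

theorem Matrix.PosSemidef.re_trace_mul_sq_le {n : Type*} [Fintype n] [DecidableEq n]
    {ρ M : Matrix n n ℂ} (hρ : ρ.PosSemidef) (htr : ρ.trace = 1) (hM : M.IsHermitian) :
    (ρ * M).trace.re ^ 2 ≤ (ρ * (M * M)).trace.re := by
  set t : ℝ := (ρ * M).trace.re
  set N : Matrix n n ℂ := M - (t : ℂ) • 1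
  have hN : Nᴴ = N := by simp [N, hM.eq, Matrix.conjTranspose_smul]
  have hvar : 0 ≤ (ρ * (N * N)).trace := by
    rw [← Matrix.mul_assoc, Matrix.trace_mul_cycle]
    simpa [hN] using (hρ.conjTranspose_mul_mul_same N).trace_nonneg
  have hexp : (ρ * (N * N)).trace =
      (ρ * (M * M)).trace - ((2 * t : ℝ) : ℂ) * (ρ * M).trace + (t ^ 2 : ℝ) := by
    simp only [N, sub_mul, mul_sub, Matrix.smul_mul, Matrix.mul_smul, one_mul, mul_one,
      Matrix.trace_sub, Matrix.trace_smul, htr, smul_eq_mul]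
    push_cast
    ring
  have hre := (Complex.nonneg_iff.mp hvar).1
  rw [hexp, Complex.add_re, Complex.sub_re, Complex.re_ofReal_mul, Complex.ofReal_re] at hre
  nlinarith

theorem mul_add_mul_le_sqrt_mul_sqrt (a b x y : ℝ) :
    a * x + b * y ≤ √(a ^ 2 + b ^ 2) * √(x ^ 2 + y ^ 2) := by
  rw [← Real.sqrt_mul (by positivity)]
  exact (le_abs_self _).trans <| Real.abs_le_sqrt <| by nlinarith [sq_nonneg (a * y - b * x)]

theorem Sop_eq_smul_kronecker_add_kronecker (α : ℝ) (A0 A1 B0 B1 : M2) :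
    Sop α A0 A1 B0 B1 = (α : ℂ) • A0 ⊗ₖ (B0 + B1) + A1 ⊗ₖ (B0 - B1) := by
  ext
  simp only [Sop, Matrix.add_apply, Matrix.sub_apply, Matrix.smul_apply, kroneckerMap_apply,
    smul_eq_mul]
  ring

theorem Matrix.IsHermitian.kronecker {m n R : Type*} [CommRing R] [StarRing R]
    {A : Matrix m m R} {B : Matrix n n R} (hA : A.IsHermitian) (hB : B.IsHermitian) :
    (A ⊗ₖ B).IsHermitian := by
  rw [IsHermitian, conjTranspose_kronecker, hA.eq, hB.eq]

theorem kronecker_mul_self_of_mul_self_eq_one {l m R : Type*} [Fintype l] [Fintype m]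
    [DecidableEq l] [CommSemiring R] {A : Matrix l l R} (hA : A * A = 1) (B : Matrix m m R) :
    (A ⊗ₖ B) * (A ⊗ₖ B) = 1 ⊗ₖ (B * B) := by
  rw [← mul_kronecker_mul, hA]

theorem IsObs.add_mul_self_add_sub_mul_self {B0 B1 : M2} (hB0 : IsObs B0) (hB1 : IsObs B1) :
    (B0 + B1) * (B0 + B1) + (B0 - B1) * (B0 - B1) = (4 : ℂ) • 1 := by
  have hexp : (B0 + B1) * (B0 + B1) + (B0 - B1) * (B0 - B1) = 2 • (B0 * B0) + 2 • (B1 * B1) := by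
    noncomm_ring
  rw [hexp, hB0.2, hB1.2]
  module

theorem re_bellValue_le (α : ℝ) {ρ : M4} (hρ : IsState ρ) {A0 A1 B0 B1 : M2}
    (hA0 : IsObs A0) (hA1 : IsObs A1) (hB0 : IsObs B0) (hB1 : IsObs B1) :
    (BellValue ρ α A0 A1 B0 B1).re ≤ 2 * √(α ^ 2 + 1) := by
  set C := B0 + B1
  set D := B0 - B1
  set x := (ρ * A0 ⊗ₖ C).trace.re
  set y := (ρ * A1 ⊗ₖ D).trace.re
  have hx : x ^ 2 ≤ (ρ * 1 ⊗ₖ (C * C)).trace.re := by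
    simpa only [kronecker_mul_self_of_mul_self_eq_one hA0.2] using
      hρ.1.re_trace_mul_sq_le hρ.2 (hA0.1.kronecker (hB0.1.add hB1.1))
  have hy : y ^ 2 ≤ (ρ * 1 ⊗ₖ (D * D)).trace.re := by
    simpa only [kronecker_mul_self_of_mul_self_eq_one hA1.2] using
      hρ.1.re_trace_mul_sq_le hρ.2 (hA1.1.kronecker (hB0.1.sub hB1.1))
  have hsum : (ρ * 1 ⊗ₖ (C * C)).trace.re + (ρ * 1 ⊗ₖ (D * D)).trace.re = 4 := by
    rw [← Complex.add_re, ← trace_add, ← Matrix.mul_add, ← kronecker_add,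
      hB0.add_mul_self_add_sub_mul_self hB1, kronecker_smul, one_kronecker_one, Matrix.mul_smul,
      trace_smul, mul_one, hρ.2]
    simp
  have hval : (BellValue ρ α A0 A1 B0 B1).re = α * x + 1 * y := by
    rw [BellValue, Sop_eq_smul_kronecker_add_kronecker, Matrix.mul_add, trace_add,
      Matrix.mul_smul, trace_smul]
    simp [x, y, C, D]
  calc (BellValue ρ α A0 A1 B0 B1).re = α * x + 1 * y := hval
    _ ≤ √(α ^ 2 + 1 ^ 2) * √(x ^ 2 + y ^ 2) := mul_add_mul_le_sqrt_mul_sqrt α 1 x y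
    _ ≤ √(α ^ 2 + 1) * 2 := by
      rw [one_pow]
      gcongr
      rw [← Real.sqrt_sq zero_le_two]
      gcongr
      linarith
    _ = 2 * √(α ^ 2 + 1) := mul_comm _ _

theorem isObs_σz : IsObs σz := by
  constructor
  · ext i j; fin_cases i <;> fin_cases j <;> simp [σz]
  · ext i j; fin_cases i <;> fin_cases j <;> simp [σz, Matrix.mul_apply]

theorem isObs_σx : IsObs σx := by
  constructor
  · ext i j; fin_cases i <;> fin_cases j <;> simp [σx]
  · ext i j; fin_cases i <;> fin_cases j <;> simp [σx, Matrix.mul_apply]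

theorem σz_mul_σx_add_σx_mul_σz : σz * σx + σx * σz = 0 := by
  ext i j; fin_cases i <;> fin_cases j <;> simp [σz, σx]

theorem IsObs.smul_add_smul {A B : M2} (hA : IsObs A) (hB : IsObs B) (hAB : A * B + B * A = 0)
    {c s : ℝ} (hcs : c ^ 2 + s ^ 2 = 1) : IsObs (c • A + s • B) := by
  refine ⟨(hA.1.smul (IsSelfAdjoint.all c)).add (hB.1.smul (IsSelfAdjoint.all s)), ?_⟩
  have hsq : (c • A + s • B) * (c • A + s • B) =
      (c ^ 2) • (A * A) + (c * s) • (A * B + B * A) + (s ^ 2) • (B * B) := by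
    simp only [add_mul, mul_add, smul_mul_smul_comm, smul_add]
    module
  rw [hsq, hA.2, hB.2, hAB, smul_zero, add_zero, ← add_smul, hcs, one_smul]

theorem trace_proj_PhiP_mul (M : M4) :
    (proj PhiP * M).trace =
      (M (0, 0) (0, 0) + M (0, 0) (1, 1) + M (1, 1) (0, 0) + M (1, 1) (1, 1)) / 2 := by
  have h2 : (√2 : ℂ) ^ 2 = 2 := by norm_cast; simp
  simp [trace, Matrix.mul_apply, proj, PhiP, ket, Fintype.sum_prod_type, vecMulVec_apply]
  field_simp
  rw [h2]
  ring

theorem isState_proj_PhiP : IsState (proj PhiP) := by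
  refine ⟨posSemidef_vecMulVec_self_star PhiP, ?_⟩
  simpa using trace_proj_PhiP_mul 1

theorem bellValue_proj_PhiP (α c s : ℝ) :
    BellValue (proj PhiP) α σz σx (c • σz + s • σx) (c • σz - s • σx) =
      (2 * (α * c + s) : ℝ) := by
  rw [BellValue, trace_proj_PhiP_mul]
  simp [Sop, σz, σx, kroneckerMap_apply]
  ring

theorem max_CHSH_quantum_general (α : ℝ) :
    IsGreatest { s : ℝ | ∃ (ρ : M4) (A0 A1 B0 B1 : M2), IsState ρ ∧
        IsObs A0 ∧ IsObs A1 ∧ IsObs B0 ∧ IsObs B1 ∧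
        BellValue ρ α A0 A1 B0 B1 = (s : ℂ) }
      (2 * Real.sqrt (α ^ 2 + 1)) := by
  refine ⟨?_, ?_⟩
  · set r := √(α ^ 2 + 1)
    have hr : r ^ 2 = α ^ 2 + 1 := Real.sq_sqrt (by positivity)
    have hr0 : r ≠ 0 := (Real.sqrt_pos.mpr (by positivity)).ne'
    have hcs : (α / r) ^ 2 + (1 / r) ^ 2 = 1 := by field_simp; linarith
    refine ⟨proj PhiP, σz, σx, _, _, isState_proj_PhiP, isObs_σz, isObs_σx,
      isObs_σz.smul_add_smul isObs_σx σz_mul_σx_add_σx_mul_σz hcs,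
      isObs_σz.smul_add_smul isObs_σx σz_mul_σx_add_σx_mul_σz (s := -(1 / r))
        (by simpa using hcs),
      ?_⟩
    rw [neg_smul, ← sub_eq_add_neg, bellValue_proj_PhiP]
    congr 1
    field_simp
    linarith
  · rintro _ ⟨ρ, A0, A1, B0, B1, hρ, hA0, hA1, hB0, hB1, hval⟩
    simpa [hval] using re_bellValue_le α hρ hA0 hA1 hB0 hB1

/-- The maximal quantum value of the α-CHSH expression over all two-qubit states and
±1-valued qubit observables is `2√(α²+1)`. -/
theorem max_CHSH_quantum (α : ℝ) (hα : 1 ≤ α) :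
    IsGreatest { s : ℝ | ∃ (ρ : M4) (A0 A1 B0 B1 : M2), IsState ρ ∧
        IsObs A0 ∧ IsObs A1 ∧ IsObs B0 ∧ IsObs B1 ∧
        BellValue ρ α A0 A1 B0 B1 = (s : ℂ) }
      (2 * Real.sqrt (α ^ 2 + 1)) :=
  max_CHSH_quantum_general α
end

section
/- Let ρ be a two-qubit state with Hilbert–Schmidt correlation matrix T given by T_ij = Tr[ρ(σ_i⊗σ_j)] and suppose T is diagonal with diagonal entries t₁, t₂, t₃. Then for unit vectors c₀ ⊥ c₁ in ℝ³, the quantity 2√(α²|T c₀|² + |T c₁|²) is maximized when |T c₀| and |T c₁| equal the largest and second-largest of |t₁|,|t₂|,|t₃| respectively, so the maximal α-CHSH value for ρ is 2√(α² t_max² + t_sec²) where t_max ≥ t_sec are the two largest values among |t₁|,|t₂|,|t₃|. -/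
lemma col_bound (a b c d e f : ℝ) (h0 : a^2+b^2+c^2 = 1) (h1 : d^2+e^2+f^2 = 1)
    (h2 : a*d + b*e + c*f = 0) : a^2 + d^2 ≤ 1 := by
  have hkey : (a^2+d^2)^2 = (a^2+d^2) - (a*b+d*e)^2 - (a*c+d*f)^2 := by
    linear_combination a^2*h0 + d^2*h1 + 2*a*d*h2
  nlinarith [sq_nonneg (a*b+d*e), sq_nonneg (a*c+d*f), sq_nonneg (a^2+d^2-1)]

lemma key_ineq (α p0 p1 p2 u0 u1 u2 v0 v1 v2 : ℝ)
    (hα : 1 ≤ α) (hp2 : 0 ≤ p2) (hp21 : p2 ≤ p1) (hp10 : p1 ≤ p0)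
    (hu0 : 0 ≤ u0) (hu1 : 0 ≤ u1) (hu2 : 0 ≤ u2)
    (hv0 : 0 ≤ v0) (hv1 : 0 ≤ v1) (hv2 : 0 ≤ v2)
    (hsu : u0+u1+u2 = 1) (hsv : v0+v1+v2 = 1) (huv : u0 + v0 ≤ 1) :
    α^2*(p0*u0+p1*u1+p2*u2) + (p0*v0+p1*v1+p2*v2) ≤ α^2*p0 + p1 := by
  have hα2 : (1:ℝ) ≤ α^2 := by nlinarith
  have e1 : u1 = 1 - u0 - u2 := by linarith
  have e2 : v1 = 1 - v0 - v2 := by linarith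
  subst e1; subst e2
  nlinarith [mul_nonneg (sub_nonneg.2 hp10) (show (0:ℝ) ≤ 1 - u0 - v0 by linarith),
    mul_nonneg (mul_nonneg (show (0:ℝ) ≤ α^2-1 by linarith) (sub_nonneg.2 hp10))
      (show (0:ℝ) ≤ 1 - u0 by linarith),
    mul_nonneg (mul_nonneg (sq_nonneg α) (sub_nonneg.2 hp21)) hu2,
    mul_nonneg (sub_nonneg.2 hp21) hv2]

lemma ub_core (α x y z u0 u1 u2 v0 v1 v2 : ℝ) (hα : 1 ≤ α)
    (h1 : u0^2+u1^2+u2^2 = 1) (h2 : v0^2+v1^2+v2^2 = 1) (h3 : u0*v0+u1*v1+u2*v2 = 0)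
    (hyx : y^2 ≤ x^2) (hzy : z^2 ≤ y^2) :
    α^2*((x*u0)^2+(y*u1)^2+(z*u2)^2) + ((x*v0)^2+(y*v1)^2+(z*v2)^2) ≤ α^2*x^2+y^2 := by
  have hcol : u0^2 + v0^2 ≤ 1 := col_bound u0 u1 u2 v0 v1 v2 h1 h2 h3
  have := key_ineq α (x^2) (y^2) (z^2) (u0^2) (u1^2) (u2^2) (v0^2) (v1^2) (v2^2) hα
    (sq_nonneg z) hzy hyx
    (sq_nonneg _) (sq_nonneg _) (sq_nonneg _) (sq_nonneg _) (sq_nonneg _) (sq_nonneg _)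
    h1 h2 hcol
  nlinarith [this]

lemma exists_pair (α : ℝ) (t : Fin 3 → ℝ) (i j : Fin 3) (hij : i ≠ j) :
    ∃ c0 c1 : Fin 3 → ℝ, (∑ k, c0 k ^ 2) = 1 ∧ (∑ k, c1 k ^ 2) = 1 ∧ (∑ k, c0 k * c1 k) = 0 ∧
      α ^ 2 * (∑ k, (t k * c0 k) ^ 2) + (∑ k, (t k * c1 k) ^ 2) = α ^ 2 * t i ^ 2 + t j ^ 2 := by
  refine ⟨fun k => if k = i then 1 else 0, fun k => if k = j then 1 else 0, ?_, ?_, ?_, ?_⟩ <;>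
    fin_cases i <;> fin_cases j <;> simp_all [Fin.sum_univ_three] <;> ring

lemma ub_all (α : ℝ) (hα : 1 ≤ α) (t : Fin 3 → ℝ) (i j : Fin 3) (hij : i ≠ j)
    (hmax : ∀ l, t l ^ 2 ≤ t i ^ 2) (hsec : ∀ l, l ≠ i → t l ^ 2 ≤ t j ^ 2)
    (c0 c1 : Fin 3 → ℝ) (h1 : (∑ k, c0 k ^ 2) = 1) (h2 : (∑ k, c1 k ^ 2) = 1)
    (h3 : (∑ k, c0 k * c1 k) = 0) :
    α ^ 2 * (∑ k, (t k * c0 k) ^ 2) + (∑ k, (t k * c1 k) ^ 2) ≤ α ^ 2 * t i ^ 2 + t j ^ 2 := by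
  simp only [Fin.sum_univ_three] at h1 h2 h3 ⊢
  rcases (show i = 0 ∨ i = 1 ∨ i = 2 by omega) with rfl|rfl|rfl <;>
    rcases (show j = 0 ∨ j = 1 ∨ j = 2 by omega) with rfl|rfl|rfl
  · exact absurd rfl hij
  · nlinarith [ub_core α (t 0) (t 1) (t 2) (c0 0) (c0 1) (c0 2) (c1 0) (c1 1) (c1 2) hα
      h1 h2 h3 (hmax 1) (hsec 2 (by decide))]
  · nlinarith [ub_core α (t 0) (t 2) (t 1) (c0 0) (c0 2) (c0 1) (c1 0) (c1 2) (c1 1) hα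
      (by linarith) (by linarith) (by linarith) (hmax 2) (hsec 1 (by decide))]
  · nlinarith [ub_core α (t 1) (t 0) (t 2) (c0 1) (c0 0) (c0 2) (c1 1) (c1 0) (c1 2) hα
      (by linarith) (by linarith) (by linarith) (hmax 0) (hsec 2 (by decide))]
  · exact absurd rfl hij
  · nlinarith [ub_core α (t 1) (t 2) (t 0) (c0 1) (c0 2) (c0 0) (c1 1) (c1 2) (c1 0) hα
      (by linarith) (by linarith) (by linarith) (hmax 2) (hsec 0 (by decide))]
  · nlinarith [ub_core α (t 2) (t 0) (t 1) (c0 2) (c0 0) (c0 1) (c1 2) (c1 0) (c1 1) hα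
      (by linarith) (by linarith) (by linarith) (hmax 0) (hsec 1 (by decide))]
  · nlinarith [ub_core α (t 2) (t 1) (t 0) (c0 2) (c0 1) (c0 0) (c1 2) (c1 1) (c1 0) hα
      (by linarith) (by linarith) (by linarith) (hmax 1) (hsec 0 (by decide))]
  · exact absurd rfl hij

/-- For a diagonal correlation matrix `T = diag(t₁,t₂,t₃)` of a two-qubit state and `α ≥ 1`,
the maximum of `2√(α²|T c₀|² + |T c₁|²)` over orthonormal pairs `(c₀, c₁)` in ℝ³ is
`2√(α² t_max² + t_sec²)`, where `t_max ≥ t_sec` are the two largest among `|t₁|,|t₂|,|t₃|`. -/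
theorem diagonal_correlation_max (α : ℝ) (hα : 1 ≤ α) (t : Fin 3 → ℝ) :
    let a : Fin 3 → ℝ := fun i => |t i|
    let tmax := max (max (a 0) (a 1)) (a 2)
    let tmin := min (min (a 0) (a 1)) (a 2)
    let tsec := a 0 + a 1 + a 2 - tmax - tmin
    IsGreatest { x : ℝ | ∃ c0 c1 : Fin 3 → ℝ,
        (∑ i, c0 i ^ 2) = 1 ∧ (∑ i, c1 i ^ 2) = 1 ∧ (∑ i, c0 i * c1 i) = 0 ∧
        x = 2 * Real.sqrt (α ^ 2 * (∑ i, (t i * c0 i) ^ 2) + (∑ i, (t i * c1 i) ^ 2)) }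
      (2 * Real.sqrt (α ^ 2 * tmax ^ 2 + tsec ^ 2)) := by
  intro a tmax tmin tsec
  have ha : ∀ i, a i = |t i| := fun _ => rfl
  have hsq : ∀ i j : Fin 3, a i ≤ a j → t i ^ 2 ≤ t j ^ 2 := by
    intro i j h
    rw [← sq_abs (t i), ← sq_abs (t j)]
    exact pow_le_pow_left₀ (abs_nonneg _) ((ha i) ▸ (ha j) ▸ h) 2
  have main_of : ∀ i j : Fin 3, i ≠ j → (∀ l, t l ^ 2 ≤ t i ^ 2) →
      (∀ l, l ≠ i → t l ^ 2 ≤ t j ^ 2) →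
      α ^ 2 * tmax ^ 2 + tsec ^ 2 = α ^ 2 * t i ^ 2 + t j ^ 2 →
      IsGreatest { x : ℝ | ∃ c0 c1 : Fin 3 → ℝ,
        (∑ i, c0 i ^ 2) = 1 ∧ (∑ i, c1 i ^ 2) = 1 ∧ (∑ i, c0 i * c1 i) = 0 ∧
        x = 2 * Real.sqrt (α ^ 2 * (∑ i, (t i * c0 i) ^ 2) + (∑ i, (t i * c1 i) ^ 2)) }
      (2 * Real.sqrt (α ^ 2 * tmax ^ 2 + tsec ^ 2)) := by
    intro i j hij hmax hsec hval
    constructor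
    · obtain ⟨c0, c1, g1, g2, g3, g4⟩ := exists_pair α t i j hij
      exact ⟨c0, c1, g1, g2, g3, by rw [hval, ← g4]⟩
    · rintro x ⟨c0, c1, g1, g2, g3, rfl⟩
      rw [hval]
      exact mul_le_mul_of_nonneg_left
        (Real.sqrt_le_sqrt (ub_all α hα t i j hij hmax hsec c0 c1 g1 g2 g3)) (by norm_num)
  rcases le_total (a 0) (a 1) with h01 | h01
  · rcases le_total (a 1) (a 2) with h12 | h12
    · -- a0 ≤ a1 ≤ a2
      have hM : tmax = a 2 := by
        show max (max (a 0) (a 1)) (a 2) = a 2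
        rw [max_eq_right h01, max_eq_right h12]
      have hm : tmin = a 0 := by
        show min (min (a 0) (a 1)) (a 2) = a 0
        rw [min_eq_left h01, min_eq_left (h01.trans h12)]
      have hS : tsec = a 1 := by
        show a 0 + a 1 + a 2 - tmax - tmin = a 1
        rw [hM, hm]; ring
      refine main_of 2 1 (by decide) ?_ ?_ ?_
      · intro l
        rcases (show l = 0 ∨ l = 1 ∨ l = 2 by omega) with rfl|rfl|rfl
        exacts [hsq 0 2 (h01.trans h12), hsq 1 2 h12, le_rfl]
      · intro l hl
        rcases (show l = 0 ∨ l = 1 ∨ l = 2 by omega) with rfl|rfl|rfl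
        exacts [hsq 0 1 h01, le_rfl, absurd rfl hl]
      · rw [hM, hS]; simp only [ha, sq_abs]
    · rcases le_total (a 0) (a 2) with h02 | h02
      · -- a0 ≤ a2 ≤ a1
        have hM : tmax = a 1 := by
          show max (max (a 0) (a 1)) (a 2) = a 1
          rw [max_eq_right h01, max_eq_left h12]
        have hm : tmin = a 0 := by
          show min (min (a 0) (a 1)) (a 2) = a 0
          rw [min_eq_left h01, min_eq_left h02]
        have hS : tsec = a 2 := by
          show a 0 + a 1 + a 2 - tmax - tmin = a 2
          rw [hM, hm]; ring
        refine main_of 1 2 (by decide) ?_ ?_ ?_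
        · intro l
          rcases (show l = 0 ∨ l = 1 ∨ l = 2 by omega) with rfl|rfl|rfl
          exacts [hsq 0 1 h01, le_rfl, hsq 2 1 h12]
        · intro l hl
          rcases (show l = 0 ∨ l = 1 ∨ l = 2 by omega) with rfl|rfl|rfl
          exacts [hsq 0 2 h02, absurd rfl hl, le_rfl]
        · rw [hM, hS]; simp only [ha, sq_abs]
      · -- a2 ≤ a0 ≤ a1
        have hM : tmax = a 1 := by
          show max (max (a 0) (a 1)) (a 2) = a 1
          rw [max_eq_right h01, max_eq_left h12]
        have hm : tmin = a 2 := by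
          show min (min (a 0) (a 1)) (a 2) = a 2
          rw [min_eq_left h01, min_eq_right h02]
        have hS : tsec = a 0 := by
          show a 0 + a 1 + a 2 - tmax - tmin = a 0
          rw [hM, hm]; ring
        refine main_of 1 0 (by decide) ?_ ?_ ?_
        · intro l
          rcases (show l = 0 ∨ l = 1 ∨ l = 2 by omega) with rfl|rfl|rfl
          exacts [hsq 0 1 h01, le_rfl, hsq 2 1 (h02.trans h01)]
        · intro l hl
          rcases (show l = 0 ∨ l = 1 ∨ l = 2 by omega) with rfl|rfl|rfl
          exacts [le_rfl, absurd rfl hl, hsq 2 0 h02]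
        · rw [hM, hS]; simp only [ha, sq_abs]
  · rcases le_total (a 1) (a 2) with h12 | h12
    · rcases le_total (a 0) (a 2) with h02 | h02
      · -- a1 ≤ a0 ≤ a2
        have hM : tmax = a 2 := by
          show max (max (a 0) (a 1)) (a 2) = a 2
          rw [max_eq_left h01, max_eq_right h02]
        have hm : tmin = a 1 := by
          show min (min (a 0) (a 1)) (a 2) = a 1
          rw [min_eq_right h01, min_eq_left h12]
        have hS : tsec = a 0 := by
          show a 0 + a 1 + a 2 - tmax - tmin = a 0
          rw [hM, hm]; ring
        refine main_of 2 0 (by decide) ?_ ?_ ?_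
        · intro l
          rcases (show l = 0 ∨ l = 1 ∨ l = 2 by omega) with rfl|rfl|rfl
          exacts [hsq 0 2 h02, hsq 1 2 h12, le_rfl]
        · intro l hl
          rcases (show l = 0 ∨ l = 1 ∨ l = 2 by omega) with rfl|rfl|rfl
          exacts [le_rfl, hsq 1 0 h01, absurd rfl hl]
        · rw [hM, hS]; simp only [ha, sq_abs]
      · -- a1 ≤ a2 ≤ a0
        have hM : tmax = a 0 := by
          show max (max (a 0) (a 1)) (a 2) = a 0
          rw [max_eq_left h01, max_eq_left h02]
        have hm : tmin = a 1 := by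
          show min (min (a 0) (a 1)) (a 2) = a 1
          rw [min_eq_right h01, min_eq_left h12]
        have hS : tsec = a 2 := by
          show a 0 + a 1 + a 2 - tmax - tmin = a 2
          rw [hM, hm]; ring
        refine main_of 0 2 (by decide) ?_ ?_ ?_
        · intro l
          rcases (show l = 0 ∨ l = 1 ∨ l = 2 by omega) with rfl|rfl|rfl
          exacts [le_rfl, hsq 1 0 h01, hsq 2 0 h02]
        · intro l hl
          rcases (show l = 0 ∨ l = 1 ∨ l = 2 by omega) with rfl|rfl|rfl
          exacts [absurd rfl hl, hsq 1 2 h12, le_rfl]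
        · rw [hM, hS]; simp only [ha, sq_abs]
    · -- a2 ≤ a1 ≤ a0
      have hM : tmax = a 0 := by
        show max (max (a 0) (a 1)) (a 2) = a 0
        rw [max_eq_left h01, max_eq_left (h12.trans h01)]
      have hm : tmin = a 2 := by
        show min (min (a 0) (a 1)) (a 2) = a 2
        rw [min_eq_right h01, min_eq_right h12]
      have hS : tsec = a 1 := by
        show a 0 + a 1 + a 2 - tmax - tmin = a 1
        rw [hM, hm]; ring
      refine main_of 0 1 (by decide) ?_ ?_ ?_
      · intro l
        rcases (show l = 0 ∨ l = 1 ∨ l = 2 by omega) with rfl|rfl|rfl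
        exacts [le_rfl, hsq 1 0 h01, hsq 2 0 (h12.trans h01)]
      · intro l hl
        rcases (show l = 0 ∨ l = 1 ∨ l = 2 by omega) with rfl|rfl|rfl
        exacts [absurd rfl hl, le_rfl, hsq 2 1 h12]
      · rw [hM, hS]; simp only [ha, sq_abs]
end

section
/- Define the concurrence estimate C_est(α) = [S(α) − 2α]/(2√(1+α²) − 2α), where S(α) = α(cosθ₂ + cosθ₃) + sin2δ sinθ₁(sinθ₂ − sinθ₃) + cosθ₁(cosθ₂ − cosθ₃). If sin2δ sinθ₁(sinθ₂ − sinθ₃) + cosθ₂(√2+1+cosθ₁) + cosθ₃(√2+1−cosθ₁) > 2(1+√2), then C_est(1) > 0 and the derivative dC_est/dα at α = 1 is strictly positive; hence there exists α > 1 with C_est(α) > C_est(1). -/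
/-!
Write `S(α) = α A + B` with `A = cos θ₂ + cos θ₃ ≤ 2`. The hypothesis says exactly that
`K = B + (√2 + 1)(A − 2)` is positive. At `α = 1` the numerator of `C_est` is
`A + B − 2 = K − √2 (A − 2) ≥ K` and the denominator is `2(√2 − 1) > 0`, while the quotient
rule gives `C_est'(1) = (2 + √2) K / 4`. A positive derivative forces `C_est` to increase just
to the right of `1`.
-/

open Real Topology Filter

theorem HasDerivAt.exists_gt_apply_gt {f : ℝ → ℝ} {f' x : ℝ} (hf : HasDerivAt f f' x)
    (hf' : 0 < f') : ∃ y > x, f x < f y := by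
  have hslope : ∀ᶠ y in 𝓝[>] x, 0 < slope f x y :=
    (hasDerivAt_iff_tendsto_slope_left_right.mp hf).2.eventually (eventually_gt_nhds hf')
  obtain ⟨y, hy, hxy⟩ := (hslope.and self_mem_nhdsWithin).exists
  rw [slope_def_field, div_pos_iff_of_pos_right (sub_pos.2 hxy)] at hy
  exact ⟨y, hxy, sub_pos.1 hy⟩

theorem hasDerivAt_sqrt_one_add_sq (x : ℝ) :
    HasDerivAt (fun α : ℝ => √(1 + α ^ 2)) (x / √(1 + x ^ 2)) x := by
  have h := ((hasDerivAt_pow 2 x).const_add 1).sqrt (by positivity)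
  convert h using 1
  push_cast
  ring

/-- `S(α) = α A + B` is the α-CHSH value; the denominator `2√(1 + α²) − 2α` is the gap between
its quantum and local bounds. -/
noncomputable def concurrenceEstimate (A B α : ℝ) : ℝ :=
  (α * A + B - 2 * α) / (2 * √(1 + α ^ 2) - 2 * α)

lemma sqrt_one_add_one_sq : √(1 + (1 : ℝ) ^ 2) = √2 := by norm_num

section concurrenceEstimate

variable (A B : ℝ)

theorem concurrenceEstimate_one :
    concurrenceEstimate A B 1 = (A + B - 2) / (2 * (√2 - 1)) := by
  rw [concurrenceEstimate, sqrt_one_add_one_sq]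
  ring_nf

theorem hasDerivAt_concurrenceEstimate_one :
    HasDerivAt (concurrenceEstimate A B) ((2 + √2) / 4 * (B + (√2 + 1) * (A - 2))) 1 := by
  have hs2 : √2 ^ 2 = 2 := sq_sqrt (by norm_num)
  have hnum : HasDerivAt (fun α : ℝ => α * A + B - 2 * α) (A - 2) 1 :=
    ((((hasDerivAt_id' 1).mul_const A).add_const B).sub ((hasDerivAt_id' 1).const_mul 2)).congr_deriv
      (by ring)
  have hden : HasDerivAt (fun α : ℝ => 2 * √(1 + α ^ 2) - 2 * α) (2 / √2 - 2) 1 :=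
    (((hasDerivAt_sqrt_one_add_sq 1).const_mul 2).sub ((hasDerivAt_id' 1).const_mul 2)).congr_deriv
      (by rw [sqrt_one_add_one_sq]; ring)
  have hden_ne : 2 * √(1 + (1 : ℝ) ^ 2) - 2 * 1 ≠ 0 := by
    rw [sqrt_one_add_one_sq]; linarith [one_lt_sqrt_two]
  refine (hnum.div hden hden_ne).congr_deriv ?_
  have hs2_ne : √2 - 1 ≠ 0 := by linarith [one_lt_sqrt_two]
  rw [sqrt_one_add_one_sq]
  field_simp
  linear_combination -2 * (√2 ^ 2 - 1) * (B + (√2 + 1) * (A - 2)) * hs2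

end concurrenceEstimate

/-- If the pure-state parameters satisfy the stated condition, the device-independent
concurrence estimate `C_est(α) = (S(α) − 2α)/(2√(1+α²) − 2α)` is positive at `α = 1`,
has strictly positive derivative there, and hence improves for some `α > 1`. -/
theorem pure_state_better_alpha (δ θ1 θ2 θ3 : ℝ)
    (Sf : ℝ → ℝ)
    (hSf : Sf = fun α => α * (cos θ2 + cos θ3)
      + sin (2 * δ) * sin θ1 * (sin θ2 - sin θ3) + cos θ1 * (cos θ2 - cos θ3))
    (Cest : ℝ → ℝ)
    (hC : Cest = fun α => (Sf α - 2 * α) / (2 * Real.sqrt (1 + α ^ 2) - 2 * α))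
    (hcond : sin (2 * δ) * sin θ1 * (sin θ2 - sin θ3)
      + cos θ2 * (Real.sqrt 2 + 1 + cos θ1) + cos θ3 * (Real.sqrt 2 + 1 - cos θ1)
      > 2 * (1 + Real.sqrt 2)) :
    Cest 1 > 0 ∧ deriv Cest 1 > 0 ∧ ∃ α > (1 : ℝ), Cest α > Cest 1 := by
  set A := cos θ2 + cos θ3
  set B := sin (2 * δ) * sin θ1 * (sin θ2 - sin θ3) + cos θ1 * (cos θ2 - cos θ3)
  have hCest : Cest = concurrenceEstimate A B := by
    subst hC hSf
    funext α
    simp only [concurrenceEstimate, B]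
    ring_nf
  have hK : 0 < B + (√2 + 1) * (A - 2) := by linear_combination hcond
  have hA : A ≤ 2 := by linarith [cos_le_one θ2, cos_le_one θ3]
  have hD := hasDerivAt_concurrenceEstimate_one A B
  have hD_pos : 0 < (2 + √2) / 4 * (B + (√2 + 1) * (A - 2)) := by positivity
  rw [hCest]
  refine ⟨?_, hD.deriv ▸ hD_pos, hD.exists_gt_apply_gt hD_pos⟩
  rw [concurrenceEstimate_one]
  have hA_term : √2 * (A - 2) ≤ 0 := mul_nonpos_of_nonneg_of_nonpos (sqrt_nonneg 2) (by linarith)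
  exact div_pos (by linarith) (by linarith [one_lt_sqrt_two])
end

section
/- Let 0 < θ₂ < π/4 and δ ∈ (0, π/2) satisfy sin2δ > (1+√2)(1−cosθ₂)/sinθ₂, and set T = sin2δ sinθ₂/(1−cosθ₂). Then α* = (T − 1/T)/2 > 1, and the function g(α) = [α(2cosθ₂ − 2) + 2 sin2δ sinθ₂]/(2√(1+α²) − 2α) attains its maximum over α ≥ 1 at α = α*, with g(α*) = (1−cosθ₂)(T² + 1)/2. -/
open Real

/-- For pure-state parameters with `0 < θ₂ < π/4` and `sin2δ > (1+√2)(1−cosθ₂)/sinθ₂`,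
setting `T = sin2δ sinθ₂/(1−cosθ₂)`, the optimizer `α* = (T − 1/T)/2` exceeds 1 and the
concurrence estimate `g` attains its maximum over `α ≥ 1` at `α*`, with value
`(1−cosθ₂)(T²+1)/2`. -/
theorem pure_state_optimal_alpha (θ2 δ : ℝ)
    (hθ : 0 < θ2 ∧ θ2 < Real.pi / 4) (hδ : 0 < δ ∧ δ < Real.pi / 2)
    (hcond : sin (2 * δ) > (1 + Real.sqrt 2) * (1 - cos θ2) / sin θ2) :
    let T := sin (2 * δ) * sin θ2 / (1 - cos θ2)
    let αstar := (T - 1 / T) / 2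
    let g : ℝ → ℝ := fun α =>
      (α * (2 * cos θ2 - 2) + 2 * sin (2 * δ) * sin θ2) / (2 * Real.sqrt (1 + α ^ 2) - 2 * α)
    1 < αstar ∧ IsMaxOn g (Set.Ici 1) αstar ∧ g αstar = (1 - cos θ2) * (T ^ 2 + 1) / 2 := by
  obtain ⟨hθ0, hθ4⟩ := hθ
  have hπ := Real.pi_gt_three
  have hs : 0 < sin θ2 := Real.sin_pos_of_pos_of_lt_pi hθ0 (by linarith)
  have hc1 : cos θ2 < 1 := by
    have h := Real.cos_lt_cos_of_nonneg_of_le_pi (le_refl 0) (by linarith) hθ0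
    simpa using h
  have hc : 0 < 1 - cos θ2 := by linarith
  have h2 : (Real.sqrt 2) ^ 2 = 2 := Real.sq_sqrt (by norm_num)
  have h2p : 1 < Real.sqrt 2 := by nlinarith [Real.sqrt_nonneg 2]
  intro T αstar g
  have hTc : T * (1 - cos θ2) = sin (2 * δ) * sin θ2 := by
    show sin (2 * δ) * sin θ2 / (1 - cos θ2) * (1 - cos θ2) = _
    field_simp
  have hT : 1 + Real.sqrt 2 < T := by
    show 1 + Real.sqrt 2 < sin (2 * δ) * sin θ2 / (1 - cos θ2)
    rw [lt_div_iff₀ hc]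
    have h := (div_lt_iff₀ hs).mp hcond
    nlinarith
  have hT0 : 0 < T := by nlinarith
  have hα1 : 1 < αstar := by
    show 1 < (T - 1 / T) / 2
    rw [lt_div_iff₀ (by norm_num : (0:ℝ) < 2)]
    have hinv : T * (1 / T) = 1 := by field_simp
    nlinarith [sq_nonneg (T - 1 - Real.sqrt 2)]
  have key : ∀ α : ℝ, 1 ≤ α →
      g α = (1 - cos θ2) * ((T - α) * (α + Real.sqrt (1 + α ^ 2))) := by
    intro α hα
    have hα0 : (0:ℝ) ≤ α := by linarith
    have hr : α < Real.sqrt (1 + α ^ 2) := by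
      rw [show α < Real.sqrt (1 + α ^ 2) ↔ α ^ 2 < 1 + α ^ 2 from Real.lt_sqrt hα0]
      nlinarith
    set r := Real.sqrt (1 + α ^ 2) with hrdef
    have hr2 : r ^ 2 = 1 + α ^ 2 := Real.sq_sqrt (by positivity)
    have hden : 2 * r - 2 * α ≠ 0 := by
      conv_rhs at hr => rw [hrdef]
      nlinarith
    show (α * (2 * cos θ2 - 2) + 2 * sin (2 * δ) * sin θ2) / (2 * r - 2 * α) = _
    rw [div_eq_iff hden]
    linear_combination (-2) * hTc - 2 * (1 - cos θ2) * (T - α) * hr2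
  have hrstar : Real.sqrt (1 + αstar ^ 2) = (T + 1 / T) / 2 := by
    rw [show (1 + αstar ^ 2) = ((T + 1 / T) / 2) ^ 2 by
      show 1 + ((T - 1 / T) / 2) ^ 2 = _
      field_simp
      ring]
    exact Real.sqrt_sq (by positivity)
  have hgstar : g αstar = (1 - cos θ2) * (T ^ 2 + 1) / 2 := by
    rw [key αstar hα1.le, hrstar]
    show (1 - cos θ2) * ((T - (T - 1 / T) / 2) * ((T - 1 / T) / 2 + (T + 1 / T) / 2)) = _
    field_simp
    ring
  refine ⟨hα1, ?_, hgstar⟩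
  rw [isMaxOn_iff]
  intro α hα
  simp only [Set.mem_Ici] at hα
  rw [key α hα, hgstar]
  have hr2 : (Real.sqrt (1 + α ^ 2)) ^ 2 = 1 + α ^ 2 := Real.sq_sqrt (by positivity)
  nlinarith [mul_nonneg hc.le (sq_nonneg (α + Real.sqrt (1 + α ^ 2) - T))]
end

section
/- Let 0 < θ₂ < π/4 and 0 ≤ p < 1 satisfy p < 1 − 1/((√2−1)sinθ₂ + cosθ₂), and set T = (1−p)sinθ₂/(1 − (1−p)cosθ₂). Then α* = (T − 1/T)/2 > 1 and the maximal value of the Werner-state concurrence estimate equals 1 − p(2−p)/(2[1 − (1−p)cosθ₂]). -/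
open Real

set_option maxHeartbeats 1000000 in
/-- For Werner-state parameters with `0 < θ₂ < π/4` and
`p < 1 − 1/((√2−1)sinθ₂ + cosθ₂)`, setting `T = (1−p)sinθ₂/(1−(1−p)cosθ₂)`,
the optimizer `α* = (T − 1/T)/2` exceeds 1 and the maximal concurrence estimate over
`α ≥ 1` equals `1 − p(2−p)/(2[1 − (1−p)cosθ₂])`. -/
theorem werner_optimal_alpha (θ2 p : ℝ)
    (hθ : 0 < θ2 ∧ θ2 < Real.pi / 4) (hp0 : 0 ≤ p) (hp1 : p < 1)
    (hcond : p < 1 - 1 / ((Real.sqrt 2 - 1) * sin θ2 + cos θ2)) :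
    let T := (1 - p) * sin θ2 / (1 - (1 - p) * cos θ2)
    let αstar := (T - 1 / T) / 2
    let Cest : ℝ → ℝ := fun α =>
      ((1 - p) * (2 * α * cos θ2 + 2 * sin θ2) - 2 * α) / (2 * Real.sqrt (1 + α ^ 2) - 2 * α)
    1 < αstar ∧
      IsGreatest (Cest '' Set.Ici 1) (1 - p * (2 - p) / (2 * (1 - (1 - p) * cos θ2))) := by
  obtain ⟨hθ1, hθ4⟩ := hθ
  have hπ := Real.pi_gt_three
  have hsin : 0 < sin θ2 := Real.sin_pos_of_pos_of_lt_pi hθ1 (by linarith)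
  have hcos : 0 < cos θ2 := Real.cos_pos_of_mem_Ioo ⟨by linarith, by linarith⟩
  have hcos1 : cos θ2 < 1 := by
    have h := Real.cos_lt_cos_of_nonneg_of_le_pi le_rfl (by linarith) hθ1
    simpa using h
  have h2 : Real.sqrt 2 ^ 2 = 2 := Real.sq_sqrt (by norm_num)
  have h2n : (0:ℝ) ≤ Real.sqrt 2 := Real.sqrt_nonneg 2
  have h2gt : 1 < Real.sqrt 2 := by nlinarith
  set q := 1 - p with hq_def
  have hq0 : 0 < q := by linarith
  have hq1 : q ≤ 1 := by linarith
  have hS : 0 < (Real.sqrt 2 - 1) * sin θ2 + cos θ2 := by nlinarith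
  have hqS : 1 < q * ((Real.sqrt 2 - 1) * sin θ2 + cos θ2) := by
    have h1 : 1 / ((Real.sqrt 2 - 1) * sin θ2 + cos θ2) < q := by linarith
    exact (div_lt_iff₀ hS).mp h1
  set b := q * sin θ2 with hb_def
  set D := 1 - q * cos θ2 with hD_def
  have hb : 0 < b := mul_pos hq0 hsin
  have hD : 0 < D := by rw [hD_def]; nlinarith
  have h3 : D < (Real.sqrt 2 - 1) * b := by rw [hD_def, hb_def]; nlinarith [hqS]
  have heq : (Real.sqrt 2 + 1) * ((Real.sqrt 2 - 1) * b) = b := by linear_combination b * h2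
  have hbD : (Real.sqrt 2 + 1) * D < b := by
    calc (Real.sqrt 2 + 1) * D < (Real.sqrt 2 + 1) * ((Real.sqrt 2 - 1) * b) :=
          mul_lt_mul_of_pos_left h3 (by linarith)
      _ = b := heq
  intro T αstar Cest
  have hT : T = b / D := rfl
  have hαs : αstar = (T - 1 / T) / 2 := rfl
  have hT0 : 0 < T := hT ▸ div_pos hb hD
  have hTT : Real.sqrt 2 + 1 < T := by rw [hT, lt_div_iff₀ hD]; linarith
  have hinv : T * (1 / T) = 1 := mul_one_div_cancel hT0.ne'
  have hα1 : 1 < αstar := by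
    rw [hαs]
    nlinarith [hinv, hTT, hT0, h2, h2n, mul_pos (sub_pos.mpr hTT) hT0,
      mul_pos (show (0:ℝ) < Real.sqrt 2 by linarith) (sub_pos.mpr hTT),
      sq_nonneg (T - Real.sqrt 2 - 1)]
  have hpyth := Real.sin_sq_add_cos_sq θ2
  have hsum : b ^ 2 + D ^ 2 = 2 * D - p * (2 - p) := by
    rw [hb_def, hD_def, hq_def]
    linear_combination (1 - p) ^ 2 * hpyth
  have hM : (1:ℝ) - p * (2 - p) / (2 * D) = (b ^ 2 + D ^ 2) / (2 * D) := by
    rw [hsum]; field_simp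
  have key : ∀ α : ℝ, Cest α =
      b * (Real.sqrt (1 + α ^ 2) + α) - D * ((Real.sqrt (1 + α ^ 2) + α) ^ 2 - 1) / 2 := by
    intro α
    have hu2 : Real.sqrt (1 + α ^ 2) ^ 2 = 1 + α ^ 2 := Real.sq_sqrt (by positivity)
    have hun : 0 ≤ Real.sqrt (1 + α ^ 2) := Real.sqrt_nonneg _
    have huα : α < Real.sqrt (1 + α ^ 2) := by nlinarith [hu2, hun]
    have hden : 2 * Real.sqrt (1 + α ^ 2) - 2 * α ≠ 0 := by
      have : (0:ℝ) < 2 * Real.sqrt (1 + α ^ 2) - 2 * α := by linarith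
      linarith
    have hC : Cest α = (q * (2 * α * cos θ2 + 2 * sin θ2) - 2 * α) /
        (2 * Real.sqrt (1 + α ^ 2) - 2 * α) := rfl
    rw [hC, div_eq_iff hden, hb_def, hD_def]
    linear_combination ((1 - q * cos θ2) * (Real.sqrt (1 + α ^ 2) + α) - 2 * (q * sin θ2)) * hu2
  clear_value T αstar Cest q b D
  constructor
  · exact hα1
  constructor
  · -- membership
    have hαval : αstar = (b ^ 2 - D ^ 2) / (2 * (b * D)) := by
      rw [hαs, hT]; field_simp
    have husq : (1:ℝ) + αstar ^ 2 = ((b ^ 2 + D ^ 2) / (2 * (b * D))) ^ 2 := by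
      rw [hαval]; field_simp; ring
    have hu : Real.sqrt (1 + αstar ^ 2) = (b ^ 2 + D ^ 2) / (2 * (b * D)) := by
      rw [husq]; exact Real.sqrt_sq (by positivity)
    have hval : Cest αstar = 1 - p * (2 - p) / (2 * D) := by
      rw [key αstar, hu, hαval, hM]
      field_simp
      ring
    exact ⟨αstar, hα1.le, hval⟩
  · rintro x ⟨α, -, rfl⟩
    have hfin : ∀ v : ℝ, (b * v - D * (v ^ 2 - 1) / 2) * (2 * D) ≤ b ^ 2 + D ^ 2 := by
      intro v
      nlinarith [sq_nonneg (D * v - b), hD]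
    rw [key α, hM, le_div_iff₀ (by positivity : (0:ℝ) < 2 * D)]
    exact hfin _
end
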